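/- For every nontrivial character ŷ of Y, the single-register compressed-oracle unitary cO_ŷ = Comp ∘ O_ŷ ∘ Comp has matrix entries ⟨e_u, cO_ŷ e_r⟩ = γ^ŷ_{u,r} for all u, r ∈ Ȳ, namely: ⟨e_⊥, cO_ŷ e_⊥⟩ = 0; ⟨e_⊥, cO_ŷ e_r⟩ = ŷ(r)/√M and ⟨e_u, cO_ŷ e_⊥⟩ = ŷ(u)/√M for r, u ∈ Y; ⟨e_u, cO_ŷ e_u⟩ = (1 − 2/M)·ŷ(u) + 1/M for u ∈ Y; and ⟨e_u, cO_ŷ e_r⟩ = (1 − ŷ(r) − ŷ(u))/M for u ≠ r in Y. Moreover, for the trivial character 0̂, cO_{0̂} is the identity. -/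

import Mathlib

/-! In the basis `(e_b)_{b ∈ Ȳ}`, `cO_ŷ` has matrix `C * D * C`, where `C` is the matrix of `Comp`
and `D` the diagonal matrix of `O_ŷ`. Expanding the product, every entry is an explicit
expression in the values of `ŷ`, `1/√M` and the character sum `∑_y ŷ(y)`, which vanishes for
nontrivial `ŷ` and equals `M` for `ŷ = 0̂`; in the latter case `C * C = 1`. -/

open EuclideanSpace

section EuclideanSpace

variable {𝕜 ι : Type*} [RCLike 𝕜] [Fintype ι] [DecidableEq ι]

theorem EuclideanSpace.toMatrix_basisFun_apply
    (f : EuclideanSpace 𝕜 ι →ₗ[𝕜] EuclideanSpace 𝕜 ι) (u r : ι) :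
    LinearMap.toMatrix (basisFun ι 𝕜).toBasis (basisFun ι 𝕜).toBasis f u r =
      inner 𝕜 (single u 1) (f (single r 1)) := by
  simp only [LinearMap.toMatrix_apply, OrthonormalBasis.coe_toBasis_repr_apply,
    OrthonormalBasis.repr_apply_apply, OrthonormalBasis.coe_toBasis, basisFun_apply]

theorem EuclideanSpace.toMatrix_basisFun_eq_diagonal
    (f : EuclideanSpace 𝕜 ι →ₗ[𝕜] EuclideanSpace 𝕜 ι) (d : ι → 𝕜)
    (hf : ∀ i, f (single i 1) = d i • single i 1) :
    LinearMap.toMatrix (basisFun ι 𝕜).toBasis (basisFun ι 𝕜).toBasis f =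
      Matrix.diagonal d := by
  ext u r
  rw [toMatrix_basisFun_apply, hf, inner_smul_right, inner_single_left, PiLp.single_apply,
    Matrix.diagonal_apply]
  split_ifs <;> simp_all

end EuclideanSpace

section CompMatrix

variable {Y : Type*} [Fintype Y]

theorem inv_sqrt_card_mul_self :
    ((Real.sqrt (Fintype.card Y) : ℝ) : ℂ)⁻¹ * ((Real.sqrt (Fintype.card Y) : ℝ) : ℂ)⁻¹ =
      (Fintype.card Y : ℂ)⁻¹ := by
  rw [← mul_inv, ← Complex.ofReal_mul, Real.mul_self_sqrt (Nat.cast_nonneg _)]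
  simp

variable [DecidableEq Y]

/-- The matrix of `Comp` in the basis `(e_b)_{b ∈ Ȳ}`, with `Ȳ = Option Y` and `⊥ = none`. -/
noncomputable def compMatrix (Y : Type*) [Fintype Y] [DecidableEq Y] :
    Matrix (Option Y) (Option Y) ℂ
  | none, none => 0
  | none, some _ => ((Real.sqrt (Fintype.card Y) : ℝ) : ℂ)⁻¹
  | some _, none => ((Real.sqrt (Fintype.card Y) : ℝ) : ℂ)⁻¹
  | some u, some v => (if u = v then 1 else 0) - (Fintype.card Y : ℂ)⁻¹

variable (χ : Y → ℂ)

theorem compMatrix_mul_diagonal_mul_compMatrix_apply (u r : Option Y) :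
    (compMatrix Y * Matrix.diagonal (Option.elim' 1 χ) * compMatrix Y) u r =
      compMatrix Y u none * compMatrix Y none r +
        ∑ y, compMatrix Y u (some y) * χ y * compMatrix Y (some y) r := by
  rw [Matrix.mul_apply]
  simp [Matrix.mul_diagonal, Fintype.sum_option, mul_assoc]

theorem compMatrix_mul_diagonal_mul_compMatrix_none_none :
    (compMatrix Y * Matrix.diagonal (Option.elim' 1 χ) * compMatrix Y) none none =
      (∑ y, χ y) / Fintype.card Y := by
  rw [compMatrix_mul_diagonal_mul_compMatrix_apply]
  simp only [compMatrix, zero_mul, zero_add, mul_comm _ (χ _), mul_assoc,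
    inv_sqrt_card_mul_self, ← Finset.sum_mul]
  ring

theorem compMatrix_mul_diagonal_mul_compMatrix_none_some (r : Y) :
    (compMatrix Y * Matrix.diagonal (Option.elim' 1 χ) * compMatrix Y) none (some r) =
      (χ r - (∑ y, χ y) / Fintype.card Y) / ((Real.sqrt (Fintype.card Y) : ℝ) : ℂ) := by
  rw [compMatrix_mul_diagonal_mul_compMatrix_apply]
  simp only [compMatrix, zero_mul, mul_sub, mul_ite, mul_one, mul_zero, Finset.sum_sub_distrib,
    Finset.sum_ite_eq', Finset.mem_univ, ↓reduceIte, ← Finset.sum_mul, ← Finset.mul_sum, zero_add]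
  ring

theorem compMatrix_mul_diagonal_mul_compMatrix_some_none (u : Y) :
    (compMatrix Y * Matrix.diagonal (Option.elim' 1 χ) * compMatrix Y) (some u) none =
      (χ u - (∑ y, χ y) / Fintype.card Y) / ((Real.sqrt (Fintype.card Y) : ℝ) : ℂ) := by
  rw [compMatrix_mul_diagonal_mul_compMatrix_apply]
  simp only [compMatrix, mul_zero, sub_mul, ite_mul, one_mul, zero_mul, Finset.sum_sub_distrib,
    Finset.sum_ite_eq, Finset.mem_univ, ↓reduceIte, ← Finset.sum_mul, ← Finset.mul_sum, zero_add]
  ring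

theorem compMatrix_mul_diagonal_mul_compMatrix_some_some (u r : Y) :
    (compMatrix Y * Matrix.diagonal (Option.elim' 1 χ) * compMatrix Y) (some u) (some r) =
      (if u = r then χ u else 0) + (1 - χ u - χ r) / Fintype.card Y +
        (∑ y, χ y) / (Fintype.card Y : ℂ) ^ 2 := by
  rw [compMatrix_mul_diagonal_mul_compMatrix_apply]
  simp only [compMatrix, inv_sqrt_card_mul_self, sub_mul, ite_mul, one_mul, zero_mul, mul_sub,
    mul_ite, mul_one, mul_zero, Finset.sum_sub_distrib, Finset.sum_ite_eq', Finset.sum_ite_eq,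
    Finset.mem_univ, ↓reduceIte, ← Finset.sum_mul, ← Finset.mul_sum]
  split_ifs with h
  · subst h; ring
  · ring

theorem compMatrix_mul_self [Nonempty Y] : compMatrix Y * compMatrix Y = 1 := by
  have hM : (Fintype.card Y : ℂ) ≠ 0 := Nat.cast_ne_zero.mpr Fintype.card_ne_zero
  have hD : Option.elim' 1 (fun _ : Y => (1 : ℂ)) = fun _ => 1 := by
    ext (_ | _) <;> rfl
  rw [show compMatrix Y * compMatrix Y =
      compMatrix Y * Matrix.diagonal (Option.elim' 1 fun _ => 1) * compMatrix Y by
    rw [hD, Matrix.diagonal_one, Matrix.mul_one]]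
  ext (_ | u) (_ | r)
  · simp [compMatrix_mul_diagonal_mul_compMatrix_none_none, hM]
  · simp [compMatrix_mul_diagonal_mul_compMatrix_none_some, hM]
  · simp [compMatrix_mul_diagonal_mul_compMatrix_some_none, hM]
  · rw [compMatrix_mul_diagonal_mul_compMatrix_some_some, Matrix.one_apply]
    simp only [Finset.sum_const, Finset.card_univ, nsmul_eq_mul, mul_one, Option.some.injEq]
    field_simp
    split_ifs <;> ring

end CompMatrix

theorem stmt_5 {Y : Type*} [Fintype Y] [DecidableEq Y] [AddCommGroup Y]
    -- a character of `Y`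
    (c : AddChar Y ℂ)
    -- the self-adjoint unitary `Comp`, given by its matrix entries
    (Comp : EuclideanSpace ℂ (Option Y) →L[ℂ] EuclideanSpace ℂ (Option Y))
    (hComp1 : inner (𝕜 := ℂ) (EuclideanSpace.single (none : Option Y) 1)
        (Comp (EuclideanSpace.single none 1)) = 0)
    (hComp2 : ∀ u : Y, inner (𝕜 := ℂ) (EuclideanSpace.single (some u) 1)
        (Comp (EuclideanSpace.single (none : Option Y) 1)) =
        ((Real.sqrt (Fintype.card Y) : ℝ) : ℂ)⁻¹)
    (hComp3 : ∀ u : Y, inner (𝕜 := ℂ) (EuclideanSpace.single (none : Option Y) 1)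
        (Comp (EuclideanSpace.single (some u) 1)) =
        ((Real.sqrt (Fintype.card Y) : ℝ) : ℂ)⁻¹)
    (hComp4 : ∀ u v : Y, inner (𝕜 := ℂ) (EuclideanSpace.single (some u) 1)
        (Comp (EuclideanSpace.single (some v) 1)) =
        (if u = v then (1 : ℂ) else 0) - (Fintype.card Y : ℂ)⁻¹)
    -- the diagonal unitary `O_ŷ`
    (O : EuclideanSpace ℂ (Option Y) →L[ℂ] EuclideanSpace ℂ (Option Y))
    (hO1 : ∀ r : Y, O (EuclideanSpace.single (some r) 1) =
        c r • EuclideanSpace.single (some r) 1)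
    (hO2 : O (EuclideanSpace.single (none : Option Y) 1) =
        EuclideanSpace.single none 1) :
    -- the matrix entries `γ^ŷ_{u,r}` of `cO_ŷ = Comp ∘ O_ŷ ∘ Comp`, for nontrivial `ŷ`
    (c ≠ 1 →
      (inner (𝕜 := ℂ) (EuclideanSpace.single (none : Option Y) 1)
          ((Comp ∘L O ∘L Comp) (EuclideanSpace.single none 1)) = 0) ∧
      (∀ r : Y, inner (𝕜 := ℂ) (EuclideanSpace.single (none : Option Y) 1)
          ((Comp ∘L O ∘L Comp) (EuclideanSpace.single (some r) 1)) =
          c r / ((Real.sqrt (Fintype.card Y) : ℝ) : ℂ)) ∧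
      (∀ u : Y, inner (𝕜 := ℂ) (EuclideanSpace.single (some u) 1)
          ((Comp ∘L O ∘L Comp) (EuclideanSpace.single (none : Option Y) 1)) =
          c u / ((Real.sqrt (Fintype.card Y) : ℝ) : ℂ)) ∧
      (∀ u : Y, inner (𝕜 := ℂ) (EuclideanSpace.single (some u) 1)
          ((Comp ∘L O ∘L Comp) (EuclideanSpace.single (some u) 1)) =
          (1 - 2 / (Fintype.card Y : ℂ)) * c u + 1 / (Fintype.card Y : ℂ)) ∧
      (∀ u r : Y, u ≠ r → inner (𝕜 := ℂ) (EuclideanSpace.single (some u) 1)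
          ((Comp ∘L O ∘L Comp) (EuclideanSpace.single (some r) 1)) =
          (1 - c r - c u) / (Fintype.card Y : ℂ))) ∧
    -- for the trivial character, `cO_{0̂}` is the identity
    (c = 1 → Comp ∘L O ∘L Comp = ContinuousLinearMap.id ℂ (EuclideanSpace ℂ (Option Y))) := by
  set b := (basisFun (Option Y) ℂ).toBasis
  have hC : LinearMap.toMatrix b b Comp = compMatrix Y := by
    ext (_ | u) (_ | v) <;>
      simp [b, toMatrix_basisFun_apply, compMatrix, hComp1, hComp2, hComp3, hComp4]
  have hO : LinearMap.toMatrix b b O = Matrix.diagonal (Option.elim' 1 c) :=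
    toMatrix_basisFun_eq_diagonal _ _ fun
      | none => by simpa using hO2
      | some r => hO1 r
  have hCOC : LinearMap.toMatrix b b ↑(Comp ∘L O ∘L Comp) =
      compMatrix Y * Matrix.diagonal (Option.elim' 1 c) * compMatrix Y := by
    rw [ContinuousLinearMap.toLinearMap_comp, ContinuousLinearMap.toLinearMap_comp,
      LinearMap.toMatrix_comp b b b, LinearMap.toMatrix_comp b b b, hC, hO, Matrix.mul_assoc]
  have hentry : ∀ u r, inner ℂ (single u 1) ((Comp ∘L O ∘L Comp) (single r 1)) =
      (compMatrix Y * Matrix.diagonal (Option.elim' 1 c) * compMatrix Y) u r := fun u r => by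
    rw [← hCOC, toMatrix_basisFun_apply]; rfl
  refine ⟨fun hc => ?_, fun hc => ?_⟩
  · have hS : ∑ y, c y = 0 := AddChar.sum_eq_zero_of_ne_one hc
    simp only [hentry, compMatrix_mul_diagonal_mul_compMatrix_none_none,
      compMatrix_mul_diagonal_mul_compMatrix_none_some,
      compMatrix_mul_diagonal_mul_compMatrix_some_none,
      compMatrix_mul_diagonal_mul_compMatrix_some_some, hS]
    refine ⟨zero_div _, fun r => by rw [zero_div, sub_zero], fun u => by rw [zero_div, sub_zero],
      fun u => by rw [if_pos trivial]; ring, fun u r hur => by rw [if_neg hur]; ring⟩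
  · have hD : Option.elim' 1 c = fun _ => 1 := by
      ext (_ | _) <;> simp [hc]
    refine ContinuousLinearMap.coe_injective ((LinearMap.toMatrix b b).injective ?_)
    rw [hCOC, hD, Matrix.diagonal_one, Matrix.mul_one, compMatrix_mul_self,
      ContinuousLinearMap.coe_id, LinearMap.toMatrix_id]
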